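/- Let Z be the n-dimensional complex null-filiform Zinbiel algebra with basis e_1,...,e_n and products [e_i, e_j] = C(i+j−1, j) e_{i+j} for 2 ≤ i+j ≤ n (zero otherwise). Then A = span{e_{⌊n/2⌋+1}, ..., e_n} is an abelian ideal of Z, Z^{⌊n/2⌋} is not abelian, and every abelian ideal of Z is contained in A; consequently α(Z) = β(Z) = n − ⌊n/2⌋ and A is the unique abelian ideal of maximal dimension. -/

import Mathlib

/-- Standard basis vectors of `ℂⁿ` (0-indexed: `e n i` is `e_{i+1}`). -/
noncomputable def e (n : ℕ) (i : Fin n) : Fin n → ℂ := Pi.single i 1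

/-- Lower central series: `lcs b 0 = Z = Z¹`, `lcs b k = Z^{k+1} = [Z, Z^k]`. -/
def lcs {F : Type*} [Field F] {Z : Type*} [AddCommGroup Z] [Module F Z]
    (b : Z →ₗ[F] Z →ₗ[F] Z) : ℕ → Submodule F Z
  | 0 => ⊤
  | k + 1 => Submodule.span F {w | ∃ x : Z, ∃ y ∈ lcs b k, w = b x y}

/-- `A` is a subalgebra. -/
def IsSubalg {F : Type*} [Field F] {Z : Type*} [AddCommGroup Z] [Module F Z]
    (b : Z →ₗ[F] Z →ₗ[F] Z) (A : Submodule F Z) : Prop :=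
  ∀ x ∈ A, ∀ y ∈ A, b x y ∈ A

/-- `A` is abelian. -/
def IsAbelian {F : Type*} [Field F] {Z : Type*} [AddCommGroup Z] [Module F Z]
    (b : Z →ₗ[F] Z →ₗ[F] Z) (A : Submodule F Z) : Prop :=
  ∀ x ∈ A, ∀ y ∈ A, b x y = 0

/-- `A` is a two-sided ideal. -/
def IsIdeal {F : Type*} [Field F] {Z : Type*} [AddCommGroup Z] [Module F Z]
    (b : Z →ₗ[F] Z →ₗ[F] Z) (A : Submodule F Z) : Prop :=
  ∀ z : Z, ∀ x ∈ A, b z x ∈ A ∧ b x z ∈ A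

/-- The span `A = span{e_{⌊n/2⌋+1}, ..., e_n}` (0-indexed: indices `≥ ⌊n/2⌋`). -/
noncomputable def Amax (n : ℕ) : Submodule ℂ (Fin n → ℂ) :=
  Submodule.span ℂ {w | ∃ i : Fin n, n / 2 ≤ (i : ℕ) ∧ w = e n i}

/- ===== Auxiliary lemmas ===== -/

lemma e_repr (n : ℕ) (x : Fin n → ℂ) : x = ∑ i, x i • e n i := by
  funext j
  simp [e, Finset.sum_apply, Pi.single_apply]

lemma b_expand {n : ℕ} (b : (Fin n → ℂ) →ₗ[ℂ] (Fin n → ℂ) →ₗ[ℂ] (Fin n → ℂ))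
    (x y : Fin n → ℂ) : b x y = ∑ i, ∑ j, (x i * y j) • b (e n i) (e n j) := by
  conv_lhs => rw [e_repr n x, e_repr n y]
  simp only [map_sum, LinearMap.sum_apply, map_smul, LinearMap.smul_apply, Finset.smul_sum,
    smul_smul]
  rw [Finset.sum_comm]
  simp [mul_comm]

lemma coeff_eval {n : ℕ}
    (b : (Fin n → ℂ) →ₗ[ℂ] (Fin n → ℂ) →ₗ[ℂ] (Fin n → ℂ))
    (htable : ∀ i j : Fin n, b (e n i) (e n j) =
      if h : (i : ℕ) + (j : ℕ) + 2 ≤ n then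
        ((Nat.choose ((i : ℕ) + (j : ℕ) + 1) ((j : ℕ) + 1) : ℂ)) •
          e n ⟨(i : ℕ) + (j : ℕ) + 1, h⟩
      else 0)
    (i j m : Fin n) : b (e n i) (e n j) m =
      if ((i : ℕ) + (j : ℕ) + 2 ≤ n ∧ (i : ℕ) + (j : ℕ) + 1 = (m : ℕ)) then
        (Nat.choose ((i : ℕ) + (j : ℕ) + 1) ((j : ℕ) + 1) : ℂ) else 0 := by
  rw [htable i j]
  by_cases h : (i : ℕ) + (j : ℕ) + 2 ≤ n
  · rw [dif_pos h]
    simp only [e, Pi.smul_apply, Pi.single_apply, smul_eq_mul]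
    split_ifs with h1 h2 h2 <;> simp_all [Fin.ext_iff]
  · rw [dif_neg h]
    simp [h]

lemma self_prod_ne {n : ℕ}
    (b : (Fin n → ℂ) →ₗ[ℂ] (Fin n → ℂ) →ₗ[ℂ] (Fin n → ℂ))
    (htable : ∀ i j : Fin n, b (e n i) (e n j) =
      if h : (i : ℕ) + (j : ℕ) + 2 ≤ n then
        ((Nat.choose ((i : ℕ) + (j : ℕ) + 1) ((j : ℕ) + 1) : ℂ)) •
          e n ⟨(i : ℕ) + (j : ℕ) + 1, h⟩
      else 0)
    (x : Fin n → ℂ) (t : ℕ) (ht2 : t < n / 2)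
    (hmin : ∀ j : Fin n, (j : ℕ) < t → x j = 0)
    (htn : t < n) (hxt : x ⟨t, htn⟩ ≠ 0) : b x x ≠ 0 := by
  have h2t : 2 * t + 2 ≤ n := by omega
  intro h0
  have hev := congrFun h0 ⟨2 * t + 1, by omega⟩
  rw [b_expand] at hev
  set m : Fin n := ⟨2 * t + 1, by omega⟩ with hm
  set T : Fin n := ⟨t, htn⟩ with hT
  have hmv : (m : ℕ) = 2 * t + 1 := rfl
  have hTv : (T : ℕ) = t := rfl
  simp only [Finset.sum_apply, Pi.smul_apply, smul_eq_mul, Pi.zero_apply] at hev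
  -- reduce the double sum to the single term i = j = T
  have key : ∀ i j : Fin n, i ≠ T ∨ j ≠ T →
      x i * x j * (b (e n i) (e n j)) m = 0 := by
    intro i j hij
    rw [coeff_eval b htable]
    split_ifs with h
    · have : (i : ℕ) + (j : ℕ) = 2 * t := by rw [hmv] at h; omega
      rcases hij with hij | hij
      · have : (i : ℕ) ≠ t := by simpa [hT, Fin.ext_iff] using hij
        rcases lt_or_gt_of_ne this with hlt | hgt
        · rw [hmin i hlt]; ring
        · have : (j : ℕ) < t := by omega
          rw [hmin j this]; ring
      · have : (j : ℕ) ≠ t := by simpa [hT, Fin.ext_iff] using hij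
        rcases lt_or_gt_of_ne this with hlt | hgt
        · rw [hmin j hlt]; ring
        · have : (i : ℕ) < t := by omega
          rw [hmin i this]; ring
    · ring
  have hsum : ∑ i : Fin n, ∑ j : Fin n, x i * x j * (b (e n i) (e n j)) m
      = x T * x T * (b (e n T) (e n T)) m := by
    rw [Finset.sum_eq_single_of_mem T (Finset.mem_univ T)]
    · rw [Finset.sum_eq_single_of_mem T (Finset.mem_univ T)]
      intro j _ hj; exact key T j (Or.inr hj)
    · intro i _ hi
      exact Finset.sum_eq_zero fun j _ => key i j (Or.inl hi)
  rw [hsum, coeff_eval b htable] at hev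
  have hc : (T : ℕ) + (T : ℕ) + 2 ≤ n ∧ (T : ℕ) + (T : ℕ) + 1 = (m : ℕ) := by
    rw [hmv, hTv]; omega
  rw [if_pos hc] at hev
  have hch : (Nat.choose ((T:ℕ)+(T:ℕ)+1) ((T:ℕ)+1) : ℂ) ≠ 0 := by
    have := Nat.choose_pos (n := (T:ℕ)+(T:ℕ)+1) (k := (T:ℕ)+1) (by omega)
    exact_mod_cast this.ne'
  rcases mul_eq_zero.mp hev with h' | h'
  · rcases mul_eq_zero.mp h' with h'' | h'' <;> exact hxt h''
  · exact hch h'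

/-- the coordinate description of Amax -/
noncomputable def lowZero (n : ℕ) : Submodule ℂ (Fin n → ℂ) where
  carrier := {x | ∀ i : Fin n, (i : ℕ) < n / 2 → x i = 0}
  add_mem' := by intro a b ha hb i hi; simp [ha i hi, hb i hi]
  zero_mem' := by intro i hi; rfl
  smul_mem' := by intro c a ha i hi; simp [ha i hi]

lemma Amax_le_lowZero (n : ℕ) : Amax n ≤ lowZero n := by
  rw [Amax, Submodule.span_le]
  rintro w ⟨i, hi, rfl⟩ j hj
  have : j ≠ i := by intro h; rw [h] at hj; omega
  simp [e, Pi.single_apply, this]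

lemma lowZero_le_Amax (n : ℕ) : lowZero n ≤ Amax n := by
  intro x hx
  rw [e_repr n x]
  refine Submodule.sum_mem _ fun i _ => ?_
  by_cases hi : (i : ℕ) < n / 2
  · rw [hx i hi]; simp
  · exact Submodule.smul_mem _ _ (Submodule.subset_span ⟨i, by omega, rfl⟩)

lemma abelian_le_Amax {n : ℕ}
    (b : (Fin n → ℂ) →ₗ[ℂ] (Fin n → ℂ) →ₗ[ℂ] (Fin n → ℂ))
    (htable : ∀ i j : Fin n, b (e n i) (e n j) =
      if h : (i : ℕ) + (j : ℕ) + 2 ≤ n then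
        ((Nat.choose ((i : ℕ) + (j : ℕ) + 1) ((j : ℕ) + 1) : ℂ)) •
          e n ⟨(i : ℕ) + (j : ℕ) + 1, h⟩
      else 0)
    (B : Submodule ℂ (Fin n → ℂ)) (hab : ∀ x ∈ B, b x x = 0) : B ≤ Amax n := by
  intro x hx
  apply lowZero_le_Amax
  intro i hi
  by_contra hne
  classical
  have hex : ∃ k, ∃ h : k < n, x ⟨k, h⟩ ≠ 0 := ⟨(i : ℕ), i.isLt, by simpa using hne⟩
  set t := Nat.find hex with htdef
  obtain ⟨htn, hxt⟩ := Nat.find_spec hex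
  have ht2 : t < n / 2 := lt_of_le_of_lt (Nat.find_min' hex ⟨i.isLt, by simpa using hne⟩) hi
  have hmin : ∀ j : Fin n, (j : ℕ) < t → x j = 0 := by
    intro j hj
    by_contra hj0
    exact Nat.find_min hex hj ⟨j.isLt, by simpa using hj0⟩
  exact self_prod_ne b htable x t ht2 hmin htn hxt (hab x hx)

lemma finrank_Amax (n : ℕ) (hn : 2 ≤ n) : Module.finrank ℂ (Amax n) = n - n / 2 := by
  have hset : {w | ∃ i : Fin n, n / 2 ≤ (i : ℕ) ∧ w = e n i}
      = Set.range (fun i : {i : Fin n // n / 2 ≤ (i : ℕ)} => e n i.1) := by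
    ext w
    constructor
    · rintro ⟨i, hi, rfl⟩; exact ⟨⟨i, hi⟩, rfl⟩
    · rintro ⟨⟨i, hi⟩, rfl⟩; exact ⟨i, hi, rfl⟩
  have hli : LinearIndependent ℂ (fun i : {i : Fin n // n / 2 ≤ (i : ℕ)} => e n i.1) := by
    have := (Pi.basisFun ℂ (Fin n)).linearIndependent
    have h2 : (fun i : {i : Fin n // n / 2 ≤ (i : ℕ)} => e n i.1)
        = (Pi.basisFun ℂ (Fin n)) ∘ (fun i => i.1) := by
      funext i; simp [e, Pi.basisFun_apply]
    rw [h2]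
    exact this.comp _ Subtype.val_injective
  rw [Amax, hset, finrank_span_eq_card hli]
  rw [Fintype.card_subtype]
  have : Finset.filter (fun x : Fin n => n / 2 ≤ (x : ℕ)) Finset.univ
      = Finset.Ici (⟨n / 2, by omega⟩ : Fin n) := by
    ext x
    simp [Fin.le_def]
  rw [this, Fin.card_Ici]

lemma e_mem_lcs {n : ℕ} (hn : 2 ≤ n)
    (b : (Fin n → ℂ) →ₗ[ℂ] (Fin n → ℂ) →ₗ[ℂ] (Fin n → ℂ))
    (htable : ∀ i j : Fin n, b (e n i) (e n j) =
      if h : (i : ℕ) + (j : ℕ) + 2 ≤ n then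
        ((Nat.choose ((i : ℕ) + (j : ℕ) + 1) ((j : ℕ) + 1) : ℂ)) •
          e n ⟨(i : ℕ) + (j : ℕ) + 1, h⟩
      else 0) :
    ∀ k, ∀ hk : k < n, e n ⟨k, hk⟩ ∈ lcs b k := by
  intro k
  induction k with
  | zero => intro hk; exact Submodule.mem_top
  | succ k ih =>
    intro hk
    have hk' : k < n := by omega
    have heq : e n ⟨k + 1, hk⟩ = b (e n ⟨0, by omega⟩) (e n ⟨k, hk'⟩) := by
      rw [htable]
      rw [dif_pos (by simp; omega)]
      simp only [Nat.zero_add, Nat.choose_self, Nat.cast_one, one_smul]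
    rw [heq]
    exact Submodule.subset_span ⟨_, _, ih hk', rfl⟩

lemma b_single_mem {n : ℕ}
    (b : (Fin n → ℂ) →ₗ[ℂ] (Fin n → ℂ) →ₗ[ℂ] (Fin n → ℂ))
    (htable : ∀ i j : Fin n, b (e n i) (e n j) =
      if h : (i : ℕ) + (j : ℕ) + 2 ≤ n then
        ((Nat.choose ((i : ℕ) + (j : ℕ) + 1) ((j : ℕ) + 1) : ℂ)) •
          e n ⟨(i : ℕ) + (j : ℕ) + 1, h⟩
      else 0)
    (i j : Fin n) (h : n / 2 ≤ (i : ℕ) ∨ n / 2 ≤ (j : ℕ)) :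
    b (e n i) (e n j) ∈ Amax n := by
  rw [htable]
  by_cases hc : (i : ℕ) + (j : ℕ) + 2 ≤ n
  · rw [dif_pos hc]
    exact Submodule.smul_mem _ _
      (Submodule.subset_span ⟨⟨(i : ℕ) + (j : ℕ) + 1, by omega⟩, by simp; omega, rfl⟩)
  · rw [dif_neg hc]; exact Submodule.zero_mem _

/- ===== Main theorem ===== -/

/-- for the `n`-dimensional complex null-filiform Zinbiel algebra with
`[e_i, e_j] = C(i+j-1, j) e_{i+j}` for `2 ≤ i+j ≤ n` (zero otherwise),
`A = span{e_{⌊n/2⌋+1}, ..., e_n}` is an abelian ideal, `Z^{⌊n/2⌋} = lcs b (n/2 - 1)` is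
not abelian, every abelian ideal is contained in `A`, every abelian subalgebra has
dimension at most `n - ⌊n/2⌋`, and `dim A = n - ⌊n/2⌋`; hence
`α(Z) = β(Z) = n - ⌊n/2⌋` and `A` is the unique abelian ideal of maximal dimension. -/
theorem stmt13 (n : ℕ) (hn : 2 ≤ n)
    (b : (Fin n → ℂ) →ₗ[ℂ] (Fin n → ℂ) →ₗ[ℂ] (Fin n → ℂ))
    (htable : ∀ i j : Fin n, b (e n i) (e n j) =
      if h : (i : ℕ) + (j : ℕ) + 2 ≤ n then
        ((Nat.choose ((i : ℕ) + (j : ℕ) + 1) ((j : ℕ) + 1) : ℂ)) •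
          e n ⟨(i : ℕ) + (j : ℕ) + 1, by omega⟩
      else 0) :
    IsIdeal b (Amax n) ∧ IsAbelian b (Amax n) ∧
    Module.finrank ℂ (Amax n) = n - n / 2 ∧
    ¬ IsAbelian b (lcs b (n / 2 - 1)) ∧
    (∀ B : Submodule ℂ (Fin n → ℂ), IsIdeal b B → IsAbelian b B → B ≤ Amax n) ∧
    (∀ S : Submodule ℂ (Fin n → ℂ), IsSubalg b S → IsAbelian b S →
      Module.finrank ℂ S ≤ n - n / 2) := by
  refine ⟨?_, ?_, ?_, ?_, ?_, ?_⟩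
  · -- IsIdeal
    intro z x hx
    constructor
    · induction hx using Submodule.span_induction with
      | mem w hw =>
        obtain ⟨j, hj, rfl⟩ := hw
        rw [e_repr n z]
        rw [map_sum, LinearMap.sum_apply]
        refine Submodule.sum_mem _ fun i _ => ?_
        rw [map_smul, LinearMap.smul_apply]
        exact Submodule.smul_mem _ _ (b_single_mem b htable i j (Or.inr hj))
      | zero => rw [map_zero]; exact Submodule.zero_mem _
      | add u v hu hv ihu ihv => rw [map_add]; exact Submodule.add_mem _ ihu ihv
      | smul c u hu ihu => rw [map_smul]; exact Submodule.smul_mem _ _ ihu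
    · induction hx using Submodule.span_induction with
      | mem w hw =>
        obtain ⟨j, hj, rfl⟩ := hw
        rw [e_repr n z]
        rw [map_sum]
        refine Submodule.sum_mem _ fun i _ => ?_
        rw [map_smul]
        exact Submodule.smul_mem _ _ (b_single_mem b htable j i (Or.inl hj))
      | zero => rw [map_zero, LinearMap.zero_apply]; exact Submodule.zero_mem _
      | add u v hu hv ihu ihv =>
        rw [map_add, LinearMap.add_apply]; exact Submodule.add_mem _ ihu ihv
      | smul c u hu ihu =>
        rw [map_smul, LinearMap.smul_apply]; exact Submodule.smul_mem _ _ ihu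
  · -- IsAbelian Amax
    intro x hx y hy
    rw [b_expand]
    refine Finset.sum_eq_zero fun i _ => Finset.sum_eq_zero fun j _ => ?_
    by_cases hi : (i : ℕ) < n / 2
    · rw [Amax_le_lowZero n hx i hi, zero_mul, zero_smul]
    · by_cases hj : (j : ℕ) < n / 2
      · rw [Amax_le_lowZero n hy j hj, mul_zero, zero_smul]
      · rw [htable, dif_neg (by omega), smul_zero]
  · exact finrank_Amax n hn
  · -- not abelian
    intro hab
    set t := n / 2 - 1 with htdef
    have htn : t < n := by omega
    have hmem : e n ⟨t, htn⟩ ∈ lcs b (n / 2 - 1) := e_mem_lcs hn b htable t htn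
    have h0 := hab _ hmem _ hmem
    rw [htable, dif_pos (by simp; omega)] at h0
    rcases smul_eq_zero.mp h0 with h' | h'
    · have := Nat.choose_pos (n := t + t + 1) (k := t + 1) (by omega)
      have h2 : (Nat.choose (t + t + 1) (t + 1) : ℂ) ≠ 0 := by exact_mod_cast this.ne'
      exact h2 (by simpa using h')
    · have := congrFun h' ⟨t + t + 1, by omega⟩
      simp [e, Pi.single_apply] at this
  · -- abelian ideal ≤ Amax
    intro B _ hab
    exact abelian_le_Amax b htable B fun x hx => hab x hx x hx
  · -- abelian subalgebra has small dimension
    intro S _ hab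
    have hle : S ≤ Amax n := abelian_le_Amax b htable S fun x hx => hab x hx x hx
    calc Module.finrank ℂ S ≤ Module.finrank ℂ (Amax n) := Submodule.finrank_mono hle
      _ = n - n / 2 := finrank_Amax n hn
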